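/- For the equally likely orthogonal basis {α|00⟩+β|11⟩, β|00⟩−α|11⟩, α|01⟩+β|10⟩, β|01⟩−α|10⟩} of ℂ²⊗ℂ² with α ≥ β > 0 real and α²+β² = 1, the separable fidelity equals α²; in particular the achievable fidelity of the computational basis measurement with decoding 00↦ψ₁, 11↦ψ₂, 01↦ψ₃, 10↦ψ₄ equals α². -/

import Mathlib

open Matrix
open scoped BigOperators ComplexOrder

noncomputable section

/-- Product vector `|a⟩⊗|b⟩`. -/
def prodv {d₁ d₂ : ℕ} (a : Fin d₁ → ℂ) (b : Fin d₂ → ℂ) : Fin d₁ × Fin d₂ → ℂ :=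
  fun y => a y.1 * b y.2

/-- Separable-fidelity set; its supremum is the separable fidelity `F_S`. -/
def sepFidSet {d₁ d₂ : ℕ} (N : ℕ) (p : Fin N → ℝ)
    (ψ : Fin N → (Fin d₁ × Fin d₂ → ℂ)) : Set ℝ :=
  {x : ℝ | ∃ (A : ℕ) (m : Fin A → ℝ) (χ₁ : Fin A → Fin d₁ → ℂ)
      (χ₂ : Fin A → Fin d₂ → ℂ) (φ : Fin A → (Fin d₁ × Fin d₂ → ℂ)),
    (∀ a, 0 < m a) ∧ (∀ a, star (φ a) ⬝ᵥ φ a = 1) ∧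
    (∑ a, (m a : ℂ) • Matrix.vecMulVec (prodv (χ₁ a) (χ₂ a))
        (star (prodv (χ₁ a) (χ₂ a))) = 1) ∧
    x = ∑ a, ∑ i, p i * m a *
          ‖star (ψ i) ⬝ᵥ prodv (χ₁ a) (χ₂ a)‖^2 *
          ‖star (ψ i) ⬝ᵥ φ a‖^2}

/-- The orthogonal basis `{α|00⟩+β|11⟩, β|00⟩−α|11⟩, α|01⟩+β|10⟩, β|01⟩−α|10⟩}`. -/
def ψαβ (α β : ℝ) : Fin 4 → (Fin 2 × Fin 2 → ℂ) :=
  ![fun y => if y = (0, 0) then (α : ℂ) else if y = (1, 1) then (β : ℂ) else 0,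
    fun y => if y = (0, 0) then (β : ℂ) else if y = (1, 1) then -(α : ℂ) else 0,
    fun y => if y = (0, 1) then (α : ℂ) else if y = (1, 0) then (β : ℂ) else 0,
    fun y => if y = (0, 1) then (β : ℂ) else if y = (1, 0) then -(α : ℂ) else 0]

/-- The decoding `00 ↦ ψ₁, 11 ↦ ψ₂, 01 ↦ ψ₃, 10 ↦ ψ₄` for the computational-basis
measurement. -/
def decode : Fin 2 × Fin 2 → Fin 4 :=
  fun a => if a = (0, 0) then 0 else if a = (1, 1) then 1
           else if a = (0, 1) then 2 else 3

/-!
Each `ψᵢ` has Schmidt coefficients `α ≥ β`, so its overlap with a product vector `χ` is at most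
`α² ‖χ‖²`. Taking the trace of the resolution of the identity `∑ mₐ |χₐ⟩⟨χₐ| = 1` gives
`∑ mₐ ‖χₐ‖² = 4`, and Bessel's inequality bounds `∑ᵢ |⟨ψᵢ, φₐ⟩|²` by `1`, so every separable
strategy has fidelity at most `¼ · α² · 4 = α²`. Measuring in the computational basis and
guessing `ψ_{decode y}` on outcome `y` attains `α²`, since `|ψ_{decode y}(y)| = α` for every `y`.
-/

section General

lemma sum_norm_sq_eq_one_of_star_dotProduct_self {n : Type*} [Fintype n] {φ : n → ℂ}
    (h : star φ ⬝ᵥ φ = 1) : ∑ y, ‖φ y‖ ^ 2 = 1 := by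
  have h' := congrArg Complex.re h
  simp only [dotProduct, Pi.star_apply, RCLike.star_def, Complex.re_sum,
    Complex.one_re] at h'
  rw [← h']
  refine Finset.sum_congr rfl fun y _ => ?_
  rw [mul_comm, Complex.mul_conj, Complex.normSq_eq_norm_sq, Complex.ofReal_re]

lemma sum_mul_sum_norm_sq_eq_card {ι n : Type*} [Fintype ι] [Fintype n] [DecidableEq n]
    (m : ι → ℝ) (v : ι → n → ℂ)
    (h : ∑ a, (m a : ℂ) • vecMulVec (v a) (star (v a)) = 1) :
    ∑ a, m a * ∑ y, ‖v a y‖ ^ 2 = Fintype.card n := by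
  have hdiag : ∀ y, ∑ a, m a * ‖v a y‖ ^ 2 = 1 := by
    intro y
    have h' := congrArg (fun M => (M y y).re) h
    simp only [Matrix.sum_apply, Matrix.smul_apply, vecMulVec_apply, Pi.star_apply,
      one_apply_eq, Complex.one_re, smul_eq_mul, RCLike.star_def, Complex.mul_conj,
      Complex.re_sum, Complex.normSq_eq_norm_sq, ← Complex.ofReal_mul, Complex.ofReal_re] at h'
    exact h'
  simp_rw [Finset.mul_sum]
  rw [Finset.sum_comm]
  simp [hdiag]

lemma sum_norm_star_dotProduct_sq_le {ι n : Type*} [Fintype ι] [DecidableEq ι] [Fintype n]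
    {ψ : ι → n → ℂ} (hψ : ∀ i j, star (ψ i) ⬝ᵥ ψ j = if i = j then 1 else 0) (φ : n → ℂ) :
    ∑ i, ‖star (ψ i) ⬝ᵥ φ‖ ^ 2 ≤ ∑ y, ‖φ y‖ ^ 2 := by
  have hON : Orthonormal ℂ fun i => WithLp.toLp 2 (ψ i) := by
    rw [orthonormal_iff_ite]
    intro i j
    rw [EuclideanSpace.inner_toLp_toLp, dotProduct_comm, hψ]
  simpa [EuclideanSpace.inner_toLp_toLp, dotProduct_comm, EuclideanSpace.norm_sq_eq]
    using hON.sum_inner_products_le (s := Finset.univ) (WithLp.toLp 2 φ)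

lemma norm_mul_add_mul_sq_le {γ δ : ℂ} {c : ℝ} (hγ : ‖γ‖ ≤ c) (hδ : ‖δ‖ ≤ c)
    (a₀ a₁ b₀ b₁ : ℂ) :
    ‖γ * (a₀ * b₀) + δ * (a₁ * b₁)‖ ^ 2
      ≤ c ^ 2 * ((‖a₀‖ ^ 2 + ‖a₁‖ ^ 2) * (‖b₀‖ ^ 2 + ‖b₁‖ ^ 2)) := by
  have hc : 0 ≤ c := (norm_nonneg _).trans hγ
  have htri : ‖γ * (a₀ * b₀) + δ * (a₁ * b₁)‖ ≤ c * (‖a₀‖ * ‖b₀‖ + ‖a₁‖ * ‖b₁‖) :=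
    calc ‖γ * (a₀ * b₀) + δ * (a₁ * b₁)‖
        ≤ ‖γ‖ * (‖a₀‖ * ‖b₀‖) + ‖δ‖ * (‖a₁‖ * ‖b₁‖) := by
          simpa only [norm_mul] using norm_add_le (γ * (a₀ * b₀)) (δ * (a₁ * b₁))
      _ ≤ c * (‖a₀‖ * ‖b₀‖) + c * (‖a₁‖ * ‖b₁‖) := by gcongr
      _ = c * (‖a₀‖ * ‖b₀‖ + ‖a₁‖ * ‖b₁‖) := by ring
  have hcs : (‖a₀‖ * ‖b₀‖ + ‖a₁‖ * ‖b₁‖) ^ 2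
      ≤ (‖a₀‖ ^ 2 + ‖a₁‖ ^ 2) * (‖b₀‖ ^ 2 + ‖b₁‖ ^ 2) := by
    nlinarith [sq_nonneg (‖a₀‖ * ‖b₁‖ - ‖a₁‖ * ‖b₀‖)]
  calc ‖γ * (a₀ * b₀) + δ * (a₁ * b₁)‖ ^ 2
      ≤ (c * (‖a₀‖ * ‖b₀‖ + ‖a₁‖ * ‖b₁‖)) ^ 2 := by gcongr
    _ ≤ c ^ 2 * ((‖a₀‖ ^ 2 + ‖a₁‖ ^ 2) * (‖b₀‖ ^ 2 + ‖b₁‖ ^ 2)) := by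
      rw [mul_pow]; gcongr

end General

section SeparableFidelity

variable {d₁ d₂ : ℕ}

lemma sum_norm_prodv_sq (a : Fin d₁ → ℂ) (b : Fin d₂ → ℂ) :
    ∑ y, ‖prodv a b y‖ ^ 2 = (∑ i, ‖a i‖ ^ 2) * ∑ j, ‖b j‖ ^ 2 := by
  simp [prodv, Fintype.sum_prod_type, mul_pow, Finset.sum_mul_sum]

lemma prodv_single_one (i : Fin d₁) (j : Fin d₂) :
    prodv (Pi.single i 1) (Pi.single j 1) = Pi.single (i, j) 1 := by
  ext ⟨k, l⟩
  simp only [prodv, Pi.single_apply, Prod.ext_iff]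
  split_ifs <;> simp_all

theorem le_of_mem_sepFidSet {N : ℕ} {ψ : Fin N → Fin d₁ × Fin d₂ → ℂ} {c t x : ℝ}
    (hc : 0 ≤ c) (ht₀ : 0 ≤ t) (hψ : ∀ i j, star (ψ i) ⬝ᵥ ψ j = if i = j then 1 else 0)
    (ht : ∀ i χ₁ χ₂, ‖star (ψ i) ⬝ᵥ prodv χ₁ χ₂‖ ^ 2 ≤ t * ∑ y, ‖prodv χ₁ χ₂ y‖ ^ 2)
    (hx : x ∈ sepFidSet N (fun _ => c) ψ) : x ≤ c * t * (d₁ * d₂) := by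
  obtain ⟨A, m, χ₁, χ₂, φ, hm, hφ, hid, rfl⟩ := hx
  have hguess : ∀ a, ∑ i, ‖star (ψ i) ⬝ᵥ φ a‖ ^ 2 ≤ 1 := fun a =>
    (sum_norm_star_dotProduct_sq_le hψ (φ a)).trans
      (sum_norm_sq_eq_one_of_star_dotProduct_self (hφ a)).le
  have hweight : ∀ a, 0 ≤ c * m a * (t * ∑ y, ‖prodv (χ₁ a) (χ₂ a) y‖ ^ 2) := fun a =>
    mul_nonneg (mul_nonneg hc (hm a).le) (mul_nonneg ht₀ (Finset.sum_nonneg fun _ _ => sq_nonneg _))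
  calc ∑ a, ∑ i, c * m a * ‖star (ψ i) ⬝ᵥ prodv (χ₁ a) (χ₂ a)‖ ^ 2 * ‖star (ψ i) ⬝ᵥ φ a‖ ^ 2
      ≤ ∑ a, ∑ i, c * m a * (t * ∑ y, ‖prodv (χ₁ a) (χ₂ a) y‖ ^ 2)
          * ‖star (ψ i) ⬝ᵥ φ a‖ ^ 2 := by
        gcongr with a _ i _
        · exact mul_nonneg hc (hm a).le
        · exact ht i _ _
    _ ≤ ∑ a, c * m a * (t * ∑ y, ‖prodv (χ₁ a) (χ₂ a) y‖ ^ 2) := by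
        gcongr with a
        rw [← Finset.mul_sum]
        exact mul_le_of_le_one_right (hweight a) (hguess a)
    _ = c * t * ∑ a, m a * ∑ y, ‖prodv (χ₁ a) (χ₂ a) y‖ ^ 2 := by
        rw [Finset.mul_sum]; exact Finset.sum_congr rfl fun a _ => by ring
    _ = c * t * (d₁ * d₂) := by
        rw [sum_mul_sum_norm_sq_eq_card m _ hid]; simp

theorem sum_sum_mul_norm_sq_mem_sepFidSet {N : ℕ} (p : Fin N → ℝ)
    (ψ : Fin N → Fin d₁ × Fin d₂ → ℂ) (φ : Fin d₁ × Fin d₂ → Fin d₁ × Fin d₂ → ℂ)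
    (hφ : ∀ y, star (φ y) ⬝ᵥ φ y = 1) :
    ∑ y, ∑ i, p i * ‖ψ i y‖ ^ 2 * ‖star (ψ i) ⬝ᵥ φ y‖ ^ 2 ∈ sepFidSet N p ψ := by
  let e : Fin (d₁ * d₂) ≃ Fin d₁ × Fin d₂ := finProdFinEquiv.symm
  refine ⟨d₁ * d₂, fun _ => 1, fun k => Pi.single (e k).1 1, fun k => Pi.single (e k).2 1,
    fun k => φ (e k), fun _ => one_pos, fun k => hφ (e k), ?_, ?_⟩
  · simp only [prodv_single_one, Complex.ofReal_one, one_smul]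
    rw [e.sum_comp fun y => vecMulVec (Pi.single y 1) (star (Pi.single y (1 : ℂ)))]
    simp [← single_eq_single_vecMulVec_single, sum_single_one]
  · simp only [prodv_single_one, dotProduct_single_one, Pi.star_apply, norm_star, mul_one]
    exact (e.sum_comp fun y => ∑ i, p i * ‖ψ i y‖ ^ 2 * ‖star (ψ i) ⬝ᵥ φ y‖ ^ 2).symm

end SeparableFidelity


section Example

variable (α β : ℝ) (φ : Fin 2 × Fin 2 → ℂ)

lemma star_ψαβ_zero_dotProduct :
    star (ψαβ α β 0) ⬝ᵥ φ = α * φ (0, 0) + β * φ (1, 1) := by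
  simp [dotProduct, Fintype.sum_prod_type, ψαβ, Prod.ext_iff]

lemma star_ψαβ_one_dotProduct :
    star (ψαβ α β 1) ⬝ᵥ φ = β * φ (0, 0) + -α * φ (1, 1) := by
  simp [dotProduct, Fintype.sum_prod_type, ψαβ, Prod.ext_iff]

lemma star_ψαβ_two_dotProduct :
    star (ψαβ α β 2) ⬝ᵥ φ = α * φ (0, 1) + β * φ (1, 0) := by
  simp [dotProduct, Fintype.sum_prod_type, ψαβ, Prod.ext_iff]

lemma star_ψαβ_three_dotProduct :
    star (ψαβ α β 3) ⬝ᵥ φ = β * φ (0, 1) + -α * φ (1, 0) := by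
  simp [dotProduct, Fintype.sum_prod_type, ψαβ, Prod.ext_iff]

variable {α β}

lemma star_ψαβ_dotProduct_ψαβ (hnorm : α ^ 2 + β ^ 2 = 1) (i j : Fin 4) :
    star (ψαβ α β i) ⬝ᵥ ψαβ α β j = if i = j then 1 else 0 := by
  have hC : (α : ℂ) ^ 2 + (β : ℂ) ^ 2 = 1 := by exact_mod_cast hnorm
  fin_cases i <;> fin_cases j <;>
    simp [dotProduct, Fintype.sum_prod_type, ψαβ, Prod.ext_iff] <;>
    first | linear_combination hC | ring

lemma norm_star_ψαβ_dotProduct_prodv_sq_le (i : Fin 4) (χ₁ χ₂ : Fin 2 → ℂ) :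
    ‖star (ψαβ α β i) ⬝ᵥ prodv χ₁ χ₂‖ ^ 2 ≤ max |α| |β| ^ 2 * ∑ y, ‖prodv χ₁ χ₂ y‖ ^ 2 := by
  have hα : ‖(α : ℂ)‖ ≤ max |α| |β| := by simp
  have hβ : ‖(β : ℂ)‖ ≤ max |α| |β| := by simp
  have hnegα : ‖-(α : ℂ)‖ ≤ max |α| |β| := by simp
  rw [sum_norm_prodv_sq, Fin.sum_univ_two, Fin.sum_univ_two]
  obtain rfl | rfl | rfl | rfl : i = 0 ∨ i = 1 ∨ i = 2 ∨ i = 3 := by fin_cases i <;> simp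
  · rw [star_ψαβ_zero_dotProduct]
    exact norm_mul_add_mul_sq_le hα hβ _ _ _ _
  · rw [star_ψαβ_one_dotProduct]
    exact norm_mul_add_mul_sq_le hβ hnegα _ _ _ _
  · rw [star_ψαβ_two_dotProduct, add_comm (‖χ₂ 0‖ ^ 2)]
    exact norm_mul_add_mul_sq_le hα hβ _ _ _ _
  · rw [star_ψαβ_three_dotProduct, add_comm (‖χ₂ 0‖ ^ 2)]
    exact norm_mul_add_mul_sq_le hβ hnegα _ _ _ _

lemma sum_sum_norm_ψαβ_decode_sq (hnorm : α ^ 2 + β ^ 2 = 1) :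
    ∑ a : Fin 2 × Fin 2, ∑ i : Fin 4,
        (4 : ℝ)⁻¹ * ‖ψαβ α β i a‖ ^ 2 * ‖star (ψαβ α β i) ⬝ᵥ ψαβ α β (decode a)‖ ^ 2
      = α ^ 2 := by
  simp only [star_ψαβ_dotProduct_ψαβ hnorm]
  simp [Fin.sum_univ_four, Fintype.sum_prod_type, decode, ψαβ]
  ring

end Example

/-- Example 3: for the equally likely basis `ψαβ` with `α ≥ β > 0`, `α² + β² = 1`,
the separable fidelity equals `α²`, and the achievable fidelity of the
computational-basis measurement with the natural decoding equals `α²`. -/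
theorem stmt14 (α β : ℝ) (hαβ : α ≥ β) (hβ : 0 < β) (hnorm : α^2 + β^2 = 1) :
    sSup (sepFidSet 4 (fun _ => (4 : ℝ)⁻¹) (ψαβ α β)) = α^2 ∧
    ∑ a : Fin 2 × Fin 2, ∑ i : Fin 4,
        (4 : ℝ)⁻¹ * ‖ψαβ α β i a‖^2 *
          ‖star (ψαβ α β i) ⬝ᵥ ψαβ α β (decode a)‖^2 = α^2 := by
  have hψ := star_ψαβ_dotProduct_ψαβ hnorm
  have hdecode := sum_sum_norm_ψαβ_decode_sq hnorm
  refine ⟨IsGreatest.csSup_eq ⟨?_, fun x hx => ?_⟩, hdecode⟩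
  · rw [← hdecode]
    exact sum_sum_mul_norm_sq_mem_sepFidSet _ _ _ fun a => by rw [hψ, if_pos rfl]
  · have hmax : max |α| |β| = α := by
      rw [abs_of_pos hβ, abs_of_pos (hβ.trans_le hαβ), max_eq_left hαβ]
    have := le_of_mem_sepFidSet (by norm_num) (sq_nonneg _) hψ
      (fun i => hmax ▸ norm_star_ψαβ_dotProduct_prodv_sq_le i) hx
    norm_num at this
    linarith
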